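/- Let g be a positive integer, h > 0 a real number, t a real number, and A an n×n complex matrix. Let D¹ be the first-order central difference operator with periodic boundary conditions on ℂ^{ℤ/gℤ} and F the discrete Fourier transform matrix on ℂ^{ℤ/gℤ}. Then exp(t·(A ⊗ D¹)) = (I_n ⊗ F) · (Σ_{l∈ℤ/gℤ} exp((i·sin(2π·l/g)·t/h)·A) ⊗ E_{l,l}) · (I_n ⊗ F†), where E_{l,l} is the standard matrix unit. -/

import Mathlib

open scoped Matrix Kronecker

/-- The first-order central difference operator with periodic boundary conditions on
`ℂ^{ℤ/gℤ}` with grid spacing `h`:  `D¹ = (1/(2h))·Σ_p (E_{p-1,p} − E_{p,p-1})`. -/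
noncomputable def centralDiff1 (g : ℕ) [NeZero g] (h : ℝ) : Matrix (ZMod g) (ZMod g) ℂ :=
  ((1 / (2 * h) : ℝ) : ℂ) •
    ∑ p : ZMod g,
      (Matrix.single (p - 1) p (1 : ℂ) - Matrix.single p (p - 1) (1 : ℂ))

/-- The discrete Fourier transform matrix on `ℂ^{ℤ/gℤ}`:
`F_{p,l} = e^{2πi·p·l/g}/√g`, indices interpreted by their integer representatives. -/
noncomputable def dftMatrix (g : ℕ) [NeZero g] : Matrix (ZMod g) (ZMod g) ℂ :=
  Matrix.of fun p l : ZMod g =>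
    Complex.exp (2 * Real.pi * Complex.I * (p.val : ℂ) * (l.val : ℂ) / (g : ℂ)) /
      ((Real.sqrt g : ℝ) : ℂ)

/-!
The columns of `F` are the characters `p ↦ e^{2πi·p·l/g}` of `ℤ/gℤ`. They are eigenvectors of both
periodic shifts, so `D¹ F = F · diag μ` with `μ_l = i·sin(2πl/g)/h`, and `F` is unitary by
orthogonality of characters. Hence `A ⊗ D¹` is conjugate by `I ⊗ F` to `A ⊗ diag μ`, which is block
diagonal with blocks `μ_l • A` and is exponentiated blockwise.
-/

namespace Matrix

variable {ι κ : Type*} [Fintype κ] [DecidableEq κ]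

theorem blockDiagonal_eq_sum_kronecker_single {α : Type*} [Semiring α] (v : κ → Matrix ι ι α) :
    blockDiagonal v = ∑ l, v l ⊗ₖ single l l 1 := by
  ext ⟨i, p⟩ ⟨j, q⟩
  rw [sum_apply, Finset.sum_eq_single p (fun c _ hc => by simp [hc]) (by simp)]
  by_cases hpq : p = q <;> simp [blockDiagonal_apply, hpq]

variable [Fintype ι] [DecidableEq ι]

omit [DecidableEq κ] in
theorem kronecker_mul_mul {α : Type*} [CommSemiring α] (A : Matrix ι ι α) (F B G : Matrix κ κ α) :
    A ⊗ₖ (F * B * G) = (1 ⊗ₖ F) * (A ⊗ₖ B) * (1 ⊗ₖ G) := by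
  rw [← mul_kronecker_mul, ← mul_kronecker_mul, one_mul, mul_one]

open scoped Norms.Operator in
theorem exp_blockDiagonal_eq_blockDiagonal_exp (v : κ → Matrix ι ι ℂ) :
    NormedSpace.exp (blockDiagonal v) = blockDiagonal fun l => NormedSpace.exp (v l) := by
  rw [exp_blockDiagonal]
  congr 1
  exact Pi.exp_def v

theorem exp_kronecker_mul_diagonal_mul (A : Matrix ι ι ℂ) {F G : Matrix κ κ ℂ} (hFG : F * G = 1)
    (μ : κ → ℂ) :
    NormedSpace.exp (A ⊗ₖ (F * diagonal μ * G)) =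
      (1 ⊗ₖ F) * (∑ l, NormedSpace.exp (μ l • A) ⊗ₖ single l l 1) * (1 ⊗ₖ G) := by
  have hU : (1 ⊗ₖ F : Matrix (ι × κ) (ι × κ) ℂ) * (1 ⊗ₖ G) = 1 := by
    rw [← mul_kronecker_mul, one_mul, hFG, one_kronecker_one]
  have hU_unit : IsUnit (1 ⊗ₖ F : Matrix (ι × κ) (ι × κ) ℂ) :=
    (isUnit_iff_isUnit_det _).2 (isUnit_det_of_right_inverse hU)
  rw [kronecker_mul_mul, ← inv_eq_right_inv hU, exp_conj _ _ hU_unit, kronecker_diagonal,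
    ← blockDiagonal_eq_sum_kronecker_single, exp_blockDiagonal_eq_blockDiagonal_exp]
  simp only [op_smul_eq_smul]

end Matrix

namespace ZMod

variable {N : ℕ} [NeZero N]

theorem star_stdAddChar (l : ZMod N) : star (stdAddChar l) = stdAddChar (-l) := by
  rw [← AddChar.inv_apply,
    ← AddChar.starComp_apply (by simp [ringChar_zmod_n, Nat.pos_of_neZero])]
  rfl

theorem stdAddChar_sub_stdAddChar_neg (l : ZMod N) :
    stdAddChar l - stdAddChar (-l) =
      2 * Complex.I * (Real.sin (2 * Real.pi * l.val / N) : ℂ) := by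
  have harg :
      2 * Real.pi * Complex.I * l.val / N = ((2 * Real.pi * l.val / N : ℝ) : ℂ) * Complex.I := by
    push_cast
    ring
  rw [AddChar.map_neg_eq_inv, stdAddChar_apply, toCircle_apply, ← Complex.exp_neg, harg,
    ← neg_mul, Complex.exp_mul_I, Complex.exp_mul_I, Complex.cos_neg, Complex.sin_neg,
    Complex.ofReal_sin]
  ring

end ZMod

open Matrix

noncomputable def centralDiff1Eigenvalue (g : ℕ) [NeZero g] (h : ℝ) (l : ZMod g) : ℂ :=
  Complex.I * Real.sin (2 * Real.pi * l.val / g) / h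

section

variable (g : ℕ) [NeZero g]

theorem dftMatrix_apply (p l : ZMod g) :
    dftMatrix g p l = ZMod.stdAddChar (p * l) / (Real.sqrt g : ℂ) := by
  have : p * l = ((p.val * l.val : ℕ) : ZMod g) := by simp
  rw [dftMatrix, of_apply, this, ZMod.stdAddChar_apply, ZMod.toCircle_natCast]
  push_cast
  ring_nf

theorem dftMatrix_apply_add (x y l : ZMod g) :
    dftMatrix g (x + y) l = dftMatrix g x l * ZMod.stdAddChar (y * l) := by
  rw [dftMatrix_apply, dftMatrix_apply, add_mul, AddChar.map_add_eq_mul]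
  ring

theorem dftMatrix_mul_conjTranspose : dftMatrix g * (dftMatrix g)ᴴ = 1 := by
  ext l m
  have hg : (Real.sqrt g : ℂ) * Real.sqrt g = g := by
    rw [← Complex.ofReal_mul, Real.mul_self_sqrt g.cast_nonneg, Complex.ofReal_natCast]
  have hterm (p : ZMod g) :
      dftMatrix g l p * star (dftMatrix g m p) = ZMod.stdAddChar (p * (l - m)) / g := by
    rw [dftMatrix_apply, dftMatrix_apply, star_div₀, ZMod.star_stdAddChar, Complex.star_def,
      Complex.conj_ofReal, div_mul_div_comm, ← AddChar.map_add_eq_mul, hg]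
    ring_nf
  simp only [mul_apply, conjTranspose_apply, hterm, ← Finset.sum_div,
    AddChar.sum_mulShift _ (ZMod.isPrimitive_stdAddChar g), sub_eq_zero, one_apply, ZMod.card]
  split_ifs <;> simp [NeZero.ne]

theorem centralDiff1_mul_apply {κ : Type*} (h : ℝ) (M : Matrix (ZMod g) κ ℂ) (x : ZMod g)
    (l : κ) : (centralDiff1 g h * M) x l = (1 / (2 * h) : ℂ) * (M (x + 1) l - M (x - 1) l) := by
  have hforward : ((∑ p : ZMod g, single (p - 1) p (1 : ℂ)) * M) x l = M (x + 1) l := by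
    rw [Matrix.sum_mul, Matrix.sum_apply, Finset.sum_eq_single (x + 1) _ (by simp)]
    · simp
    · intro p _ hp
      exact single_mul_apply_of_ne (h := fun hx => hp (by rw [hx, sub_add_cancel])) ..
  have hbackward : ((∑ p : ZMod g, single p (p - 1) (1 : ℂ)) * M) x l = M (x - 1) l := by
    rw [Matrix.sum_mul, Matrix.sum_apply, Finset.sum_eq_single x _ (by simp)]
    · simp
    · intro p _ hp
      exact single_mul_apply_of_ne (h := hp.symm) ..
  rw [centralDiff1, Matrix.smul_mul, Matrix.smul_apply, Finset.sum_sub_distrib, Matrix.sub_mul,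
    Matrix.sub_apply, hforward, hbackward, smul_eq_mul]
  push_cast
  ring

theorem centralDiff1_mul_dftMatrix (h : ℝ) :
    centralDiff1 g h * dftMatrix g = dftMatrix g * diagonal (centralDiff1Eigenvalue g h) := by
  ext x l
  rw [centralDiff1_mul_apply, mul_diagonal, sub_eq_add_neg x 1, dftMatrix_apply_add,
    dftMatrix_apply_add, one_mul, neg_one_mul, ← mul_sub, ZMod.stdAddChar_sub_stdAddChar_neg,
    centralDiff1Eigenvalue]
  ring

theorem centralDiff1_eq_dftMatrix_mul_diagonal_mul (h : ℝ) :
    centralDiff1 g h = dftMatrix g * diagonal (centralDiff1Eigenvalue g h) * (dftMatrix g)ᴴ := by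
  rw [← centralDiff1_mul_dftMatrix, mul_assoc, dftMatrix_mul_conjTranspose, mul_one]

end

theorem exp_kronecker_centralDiff1_general (g : ℕ) [NeZero g] (h t : ℝ) (n : ℕ)
    (A : Matrix (Fin n) (Fin n) ℂ) :
    NormedSpace.exp ((t : ℂ) • (A ⊗ₖ centralDiff1 g h)) =
      ((1 : Matrix (Fin n) (Fin n) ℂ) ⊗ₖ dftMatrix g) *
        (∑ l : ZMod g,
          NormedSpace.exp
              ((Complex.I * ((Real.sin (2 * Real.pi * (l.val : ℝ) / g) : ℝ) : ℂ) * (t : ℂ) /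
                  (h : ℂ)) • A) ⊗ₖ
            Matrix.single l l (1 : ℂ)) *
        ((1 : Matrix (Fin n) (Fin n) ℂ) ⊗ₖ (dftMatrix g)ᴴ) := by
  rw [← smul_kronecker, centralDiff1_eq_dftMatrix_mul_diagonal_mul,
    exp_kronecker_mul_diagonal_mul _ (dftMatrix_mul_conjTranspose g)]
  simp only [smul_smul, centralDiff1Eigenvalue, div_mul_eq_mul_div]

/-- **Exponential of one electronic-Liouvillian term**:
`exp(t·(A ⊗ D¹)) = (I ⊗ F)·(Σ_l exp((i·sin(2πl/g)·t/h)·A) ⊗ E_{l,l})·(I ⊗ F†)`. -/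
theorem exp_kronecker_centralDiff1 (g : ℕ) [NeZero g] (h t : ℝ) (hh : 0 < h) (n : ℕ)
    (A : Matrix (Fin n) (Fin n) ℂ) :
    NormedSpace.exp ((t : ℂ) • (A ⊗ₖ centralDiff1 g h)) =
      ((1 : Matrix (Fin n) (Fin n) ℂ) ⊗ₖ dftMatrix g) *
        (∑ l : ZMod g,
          NormedSpace.exp
              ((Complex.I * ((Real.sin (2 * Real.pi * (l.val : ℝ) / g) : ℝ) : ℂ) * (t : ℂ) /
                  (h : ℂ)) • A) ⊗ₖ
            Matrix.single l l (1 : ℂ)) *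
        ((1 : Matrix (Fin n) (Fin n) ℂ) ⊗ₖ (dftMatrix g)ᴴ) :=
  exp_kronecker_centralDiff1_general g h t n A
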